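/- arXiv:1803.09654 — 2 statements merged into one kernel-verified Lean document; each statement's English description precedes it below -/
import Mathlib

section
/- Let φ : (0,ε) → ℂⁿ be a real-analytic curve, g₁,…,g_p polynomials with gⱼ(φ(s)) = 0 for all j and s, and suppose there are analytic functions λ₁,…,λ_{p+1} : (0,ε) → ℂ with ∑_{j=1}^p λⱼ(s)∇gⱼ(φ(s)) = λ_{p+1}(s)·φ(s) for all s. Then for all s ∈ (0,ε), the conjugate of λ_{p+1}(s) times d(‖φ(s)‖²)/ds equals 0. In particular, if λ_{p+1} is not identically zero, then ‖φ(s)‖ is constant on some subinterval. -/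
open MvPolynomial

/-- The (conjugated) gradient of a polynomial `g : ℂⁿ → ℂ` at `x`. -/
noncomputable def cgrad {n : ℕ} (g : MvPolynomial (Fin n) ℂ) (x : Fin n → ℂ) : Fin n → ℂ :=
  fun i => starRingEnd ℂ (eval x (pderiv i g))

/-- The Hermitian norm `‖x‖ = √(∑ |xᵢ|²)` on `ℂⁿ`. -/
noncomputable def hnorm {n : ℕ} (x : Fin n → ℂ) : ℝ :=
  Real.sqrt (∑ i, Complex.normSq (x i))

/-!
Differentiating `gⱼ(φ(s)) = 0` shows that `φ'(s)` is Hermitian-orthogonal to every `∇gⱼ(φ(s))`,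
hence to `λ_{p+1}(s) φ(s)`. Since `d(‖φ(s)‖²)/ds = 2 Re ⟨φ'(s), φ(s)⟩`, the derivative of `‖φ‖²`
vanishes wherever `λ_{p+1}` does not, and by continuity `λ_{p+1}` is nonzero on a whole interval
as soon as it is nonzero at one point.
-/

open Set Filter Topology

theorem exists_Ioo_subset_of_mem_nhds_of_mem_Ioo {α : Type*} [LinearOrder α] [TopologicalSpace α]
    [OrderTopology α] {a₀ b₀ x : α} {S : Set α} (hx : x ∈ Ioo a₀ b₀) (hS : S ∈ 𝓝 x) :
    ∃ a b, a₀ ≤ a ∧ a < b ∧ b ≤ b₀ ∧ Ioo a b ⊆ S := by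
  obtain ⟨l, u, ⟨hlx, hxu⟩, hsub⟩ :=
    (mem_nhds_iff_exists_Ioo_subset' ⟨a₀, hx.1⟩ ⟨b₀, hx.2⟩).mp hS
  refine ⟨max a₀ l, min b₀ u, le_max_left _ _, ?_, min_le_left _ _, ?_⟩
  · exact (max_lt hx.1 hlx).trans (lt_min hx.2 hxu)
  · exact (Ioo_subset_Ioo (le_max_right _ _) (min_le_right _ _)).trans hsub

theorem HasDerivAt.mvPolynomial_eval {𝕜 𝔸 σ : Type*} [NontriviallyNormedField 𝕜]
    [NormedCommRing 𝔸] [NormedAlgebra 𝕜 𝔸] [Fintype σ] (P : MvPolynomial σ 𝔸)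
    {f : 𝕜 → σ → 𝔸} {f' : σ → 𝔸} {s : 𝕜} (hf : ∀ i, HasDerivAt (f · i) (f' i) s) :
    HasDerivAt (fun t => eval (f t) P) (∑ i, eval (f s) (pderiv i P) * f' i) s := by
  classical
  induction P using MvPolynomial.induction_on with
  | C a => simpa using hasDerivAt_const s a
  | add p q hp hq =>
    simpa only [eval_add, map_add, add_mul, Finset.sum_add_distrib] using hp.fun_add hq
  | mul_X p i hp =>
    convert hp.fun_mul (hf i) using 1
    · simp only [eval_mul, eval_X]
    · simp only [pderiv_mul, pderiv_X, Pi.single_apply, mul_ite, mul_one, mul_zero, map_add,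
        eval_mul, eval_X, add_mul, Finset.sum_add_distrib, Finset.sum_mul]
      simp only [apply_ite (eval (f s)), map_zero, ite_mul, zero_mul, Finset.sum_ite_eq,
        Finset.mem_univ, if_true]
      exact congrArg (· + _) (Finset.sum_congr rfl fun _ _ => mul_right_comm _ _ _)

theorem HasDerivAt.sum_eval_pderiv_mul_eq_zero {𝕜 𝔸 σ : Type*} [NontriviallyNormedField 𝕜]
    [NormedCommRing 𝔸] [NormedAlgebra 𝕜 𝔸] [Fintype σ] {P : MvPolynomial σ 𝔸}
    {f : 𝕜 → σ → 𝔸} {f' : σ → 𝔸} {s : 𝕜} (hf : ∀ i, HasDerivAt (f · i) (f' i) s)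
    (hP : ∀ᶠ t in 𝓝 s, eval (f t) P = 0) :
    ∑ i, eval (f s) (pderiv i P) * f' i = 0 :=
  ((HasDerivAt.mvPolynomial_eval P hf).congr_of_eventuallyEq (hP.mono fun _ h => h.symm)).unique
    (hasDerivAt_const s 0)

theorem HasDerivAt.sum_normSq {σ : Type*} [Fintype σ] {f : ℝ → σ → ℂ} {f' : σ → ℂ} {s : ℝ}
    (hf : ∀ i, HasDerivAt (f · i) (f' i) s) :
    HasDerivAt (fun t => ∑ i, Complex.normSq (f t i)) (2 * (f' ⬝ᵥ star (f s)).re) s := by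
  have h := HasDerivAt.fun_sum (u := Finset.univ) fun i _ => (hf i).norm_sq
  simp only [Complex.sq_norm] at h
  refine h.congr_deriv ?_
  simp [dotProduct, Complex.re_sum, Finset.mul_sum, Complex.inner]

theorem star_mul_dotProduct_star_eq_zero {R ι m : Type*} [CommRing R] [StarRing R] [Fintype ι]
    [Fintype m] {v : ι → m → R} {c : ι → R} {μ : R} {x d : m → R}
    (hv : ∑ j, c j • v j = μ • x) (hd : ∀ j, d ⬝ᵥ star (v j) = 0) :
    star μ * (d ⬝ᵥ star x) = 0 := by
  rw [← smul_eq_mul, ← dotProduct_smul, ← star_smul, ← hv, star_sum, dotProduct_sum]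
  simp [star_smul, dotProduct_smul, hd]

theorem dotProduct_star_cgrad {n : ℕ} (g : MvPolynomial (Fin n) ℂ) (x d : Fin n → ℂ) :
    d ⬝ᵥ star (cgrad g x) = ∑ i, eval x (pderiv i g) * d i := by
  simp [dotProduct, cgrad, mul_comm]

theorem hasDerivAt_sum_normSq_zero_of_lagrange_condition {n p : ℕ} {φ : ℝ → Fin n → ℂ}
    {g : Fin p → MvPolynomial (Fin n) ℂ} {c : Fin p → ℂ} {μ : ℂ} {s : ℝ}
    (hφ : DifferentiableAt ℝ φ s) (hg : ∀ j, ∀ᶠ t in 𝓝 s, eval (φ t) (g j) = 0)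
    (hgrad : ∑ j, c j • cgrad (g j) (φ s) = μ • φ s) (hμ : μ ≠ 0) :
    HasDerivAt (fun t => ∑ i, Complex.normSq (φ t i)) 0 s := by
  have hφi : ∀ i, HasDerivAt (φ · i) (deriv φ s i) s := hasDerivAt_pi.mp hφ.hasDerivAt
  have htangent : ∀ j, deriv φ s ⬝ᵥ star (cgrad (g j) (φ s)) = 0 := fun j => by
    rw [dotProduct_star_cgrad]
    exact HasDerivAt.sum_eval_pderiv_mul_eq_zero hφi (hg j)
  have horth : deriv φ s ⬝ᵥ star (φ s) = 0 :=
    (mul_eq_zero.mp (star_mul_dotProduct_star_eq_zero hgrad htangent)).resolve_left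
      (star_ne_zero.mpr hμ)
  simpa [horth] using HasDerivAt.sum_normSq hφi

theorem tangency_curve_norm_constant_general (n p : ℕ) (ε : ℝ)
    (φ : ℝ → Fin n → ℂ) (hφ : ∀ s ∈ Set.Ioo 0 ε, AnalyticAt ℝ φ s)
    (lam : Fin (p + 1) → ℝ → ℂ) (hlam : ∀ j, ∀ s ∈ Set.Ioo 0 ε, AnalyticAt ℝ (lam j) s)
    (g : Fin p → MvPolynomial (Fin n) ℂ)
    (hg : ∀ j, ∀ s ∈ Set.Ioo 0 ε, eval (φ s) (g j) = 0)
    (heq : ∀ s ∈ Set.Ioo 0 ε,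
      (∑ j : Fin p, lam j.castSucc s • cgrad (g j) (φ s)) = lam (Fin.last p) s • φ s) :
    (∀ s ∈ Set.Ioo 0 ε,
      starRingEnd ℂ (lam (Fin.last p) s) *
        ((deriv (fun t => ∑ i, Complex.normSq (φ t i)) s : ℝ) : ℂ) = 0) ∧
    ((¬ ∀ s ∈ Set.Ioo 0 ε, lam (Fin.last p) s = 0) →
      ∃ a b : ℝ, 0 ≤ a ∧ a < b ∧ b ≤ ε ∧
        ∀ s ∈ Set.Ioo a b, ∀ t ∈ Set.Ioo a b, hnorm (φ s) = hnorm (φ t)) := by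
  have hN : ∀ s ∈ Ioo 0 ε, lam (Fin.last p) s ≠ 0 →
      HasDerivAt (fun t => ∑ i, Complex.normSq (φ t i)) 0 s := fun s hs =>
    hasDerivAt_sum_normSq_zero_of_lagrange_condition (hφ s hs).differentiableAt
      (fun j => eventually_of_mem (isOpen_Ioo.mem_nhds hs) (hg j)) (heq s hs)
  refine ⟨fun s hs => ?_, fun hne => ?_⟩
  · by_cases hμ : lam (Fin.last p) s = 0
    · simp [hμ]
    · simp [(hN s hs hμ).deriv]
  · push Not at hne
    obtain ⟨s₀, hs₀, hμ⟩ := hne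
    obtain ⟨a, b, ha, hab, hb, hsub⟩ := exists_Ioo_subset_of_mem_nhds_of_mem_Ioo hs₀
      ((hlam (Fin.last p) s₀ hs₀).continuousAt.eventually_ne hμ)
    have hN' : ∀ x ∈ Ioo a b, HasDerivAt (fun t => ∑ i, Complex.normSq (φ t i)) 0 x :=
      fun x hx => hN x (Ioo_subset_Ioo ha hb hx) (hsub hx)
    refine ⟨a, b, ha, hab, hb, fun s hs t ht => congrArg Real.sqrt ?_⟩
    exact isOpen_Ioo.is_const_of_deriv_eq_zero isPreconnected_Ioo
      (fun x hx => (hN' x hx).differentiableAt.differentiableWithinAt)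
      (fun x hx => (hN' x hx).deriv) hs ht

/-- If an analytic curve `φ` stays in `S = {g₁ = ⋯ = g_p = 0}` and
`∑_{j=1}^p λⱼ(s) ∇gⱼ(φ(s)) = λ_{p+1}(s) φ(s)`, then
`conj(λ_{p+1}(s)) · d(‖φ(s)‖²)/ds = 0` on `(0,ε)`; in particular, if `λ_{p+1}`
is not identically zero then `‖φ(s)‖` is constant on some subinterval. -/
theorem tangency_curve_norm_constant (n p : ℕ) (ε : ℝ) (hε : 0 < ε)
    (φ : ℝ → Fin n → ℂ) (hφ : ∀ s ∈ Set.Ioo 0 ε, AnalyticAt ℝ φ s)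
    (lam : Fin (p + 1) → ℝ → ℂ) (hlam : ∀ j, ∀ s ∈ Set.Ioo 0 ε, AnalyticAt ℝ (lam j) s)
    (g : Fin p → MvPolynomial (Fin n) ℂ)
    (hg : ∀ j, ∀ s ∈ Set.Ioo 0 ε, eval (φ s) (g j) = 0)
    (heq : ∀ s ∈ Set.Ioo 0 ε,
      (∑ j : Fin p, lam j.castSucc s • cgrad (g j) (φ s)) = lam (Fin.last p) s • φ s) :
    (∀ s ∈ Set.Ioo 0 ε,
      starRingEnd ℂ (lam (Fin.last p) s) *
        ((deriv (fun t => ∑ i, Complex.normSq (φ t i)) s : ℝ) : ℂ) = 0) ∧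
    ((¬ ∀ s ∈ Set.Ioo 0 ε, lam (Fin.last p) s = 0) →
      ∃ a b : ℝ, 0 ≤ a ∧ a < b ∧ b ≤ ε ∧
        ∀ s ∈ Set.Ioo a b, ∀ t ∈ Set.Ioo a b, hnorm (φ s) = hnorm (φ t)) :=
  tangency_curve_norm_constant_general n p ε φ hφ lam hlam g hg heq
end

section
/- Let φ : (0,ε) → ℂⁿ, λⱼ : (0,ε) → ℂ (j = 1,…,p+1) be analytic, f, g₁,…,g_p polynomials with gⱼ∘φ ≡ 0 for all j, and ∇f(φ(s)) + ∑_{j=1}^p λⱼ(s)∇gⱼ(φ(s)) = λ_{p+1}(s)φ(s) for all s ∈ (0,ε). If λ_{p+1} is not identically zero, then the real part of (1/conj(λ_{p+1}(s)))·d(f∘φ)/ds equals (1/2)·d(‖φ(s)‖²)/ds wherever λ_{p+1}(s) ≠ 0. In particular, if moreover ‖φ(s)‖ is not eventually constant, then f∘φ is not constant. -/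
/-! Pairing the Lagrange identity with `φ'` kills the `∇gⱼ` terms, because `gⱼ ∘ φ ≡ 0`
forces `⟨φ', ∇gⱼ(φ)⟩ = 0`; hence `(f ∘ φ)' = conj λ_{p+1} ⟨φ', φ⟩`, while
`(‖φ‖²)' = 2 Re ⟨φ', φ⟩`. If `f ∘ φ` is constant, then `⟨φ', φ⟩` vanishes on the open set
where `λ_{p+1} ≠ 0`; being analytic, it vanishes on all of `(0, ε)`, so `‖φ‖` is constant. -/

open MvPolynomial

open Filter Topology

theorem MvPolynomial.hasDerivAt_eval_comp {𝕜 𝔸 σ : Type*} [NontriviallyNormedField 𝕜]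
    [NormedCommRing 𝔸] [NormedAlgebra 𝕜 𝔸] [Fintype σ] (h : MvPolynomial σ 𝔸)
    {φ : 𝕜 → σ → 𝔸} {φ' : σ → 𝔸} {s : 𝕜} (hφ : HasDerivAt φ φ' s) :
    HasDerivAt (fun t => eval (φ t) h) (φ' ⬝ᵥ fun i => eval (φ s) (pderiv i h)) s := by
  classical
  rw [hasDerivAt_pi] at hφ
  induction h using MvPolynomial.induction_on with
  | C a => simpa using hasDerivAt_const s a
  | add p q hp hq => simpa [← dotProduct_add, Pi.add_def] using hp.fun_add hq
  | mul_X p j hp =>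
    have hpX : (fun i => eval (φ s) (pderiv i (p * X j)))
        = φ s j • (fun i => eval (φ s) (pderiv i p)) + eval (φ s) p • Pi.single j 1 := by
      ext i
      by_cases hij : i = j
      · subst hij; simp [add_comm]
      · simp [pderiv_X, hij, Ne.symm hij, mul_comm]
    convert hp.fun_mul (hφ j) using 1
    · simp
    · rw [hpX, dotProduct_add, dotProduct_smul, dotProduct_smul, dotProduct_single, smul_eq_mul,
        smul_eq_mul, mul_one, mul_comm]

theorem star_cgrad {n : ℕ} (h : MvPolynomial (Fin n) ℂ) (x : Fin n → ℂ) :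
    star (cgrad h x) = fun i => eval x (pderiv i h) := by
  ext i; simp [cgrad]

theorem HasDerivAt.eq_zero_of_eventuallyEq_const {𝕜 F : Type*} [NontriviallyNormedField 𝕜]
    [NormedAddCommGroup F] [NormedSpace 𝕜 F] {f : 𝕜 → F} {f' : F} {x : 𝕜} {c : F}
    (hf : HasDerivAt f f' x) (hc : f =ᶠ[𝓝 x] fun _ => c) : f' = 0 :=
  (hf.congr_of_eventuallyEq hc.symm).unique (hasDerivAt_const x c)

theorem dotProduct_star_eq_of_add_sum_smul_eq_smul {R σ ι : Type*} [CommSemiring R]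
    [StarRing R] [Fintype σ] [Fintype ι] {a x v : σ → R} {b : ι → σ → R} {μ : ι → R} {c : R}
    (h : a + ∑ j, μ j • b j = c • x) (hb : ∀ j, v ⬝ᵥ star (b j) = 0) :
    v ⬝ᵥ star a = star c * (v ⬝ᵥ star x) := by
  simpa [dotProduct_add, star_sum, dotProduct_sum, star_smul, hb] using
    congrArg (fun w => v ⬝ᵥ star w) h

theorem hasDerivAt_eval_of_cgrad_add_sum_smul_eq_smul {n : ℕ} {ι : Type*} [Fintype ι]
    {f : MvPolynomial (Fin n) ℂ} {g : ι → MvPolynomial (Fin n) ℂ} {μ : ι → ℂ} {c : ℂ}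
    {φ : ℝ → Fin n → ℂ} {φ' : Fin n → ℂ} {s : ℝ} (hφ : HasDerivAt φ φ' s)
    (hg : ∀ j, (fun t => eval (φ t) (g j)) =ᶠ[𝓝 s] fun _ => 0)
    (h : cgrad f (φ s) + ∑ j, μ j • cgrad (g j) (φ s) = c • φ s) :
    HasDerivAt (fun t => eval (φ t) f) (star c * (φ' ⬝ᵥ star (φ s))) s := by
  have hg' : ∀ j, φ' ⬝ᵥ star (cgrad (g j) (φ s)) = 0 := fun j => by
    rw [star_cgrad]
    exact ((g j).hasDerivAt_eval_comp hφ).eq_zero_of_eventuallyEq_const (hg j)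
  rw [← dotProduct_star_eq_of_add_sum_smul_eq_smul h hg', star_cgrad]
  exact f.hasDerivAt_eval_comp hφ

theorem Complex.hasDerivAt_normSq {u : ℝ → ℂ} {u' : ℂ} {s : ℝ} (hu : HasDerivAt u u' s) :
    HasDerivAt (fun t => normSq (u t)) (2 * (u' * star (u s)).re) s := by
  have := hu.norm_sq
  simp only [← normSq_eq_norm_sq, Complex.inner] at this
  exact this

theorem hasDerivAt_sum_normSq {σ : Type*} [Fintype σ] {φ : ℝ → σ → ℂ} {φ' : σ → ℂ} {s : ℝ}
    (hφ : HasDerivAt φ φ' s) :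
    HasDerivAt (fun t => ∑ i, Complex.normSq (φ t i)) (2 * (φ' ⬝ᵥ star (φ s)).re) s := by
  rw [hasDerivAt_pi] at hφ
  simpa [dotProduct, Complex.re_sum, Finset.mul_sum] using
    HasDerivAt.fun_sum (u := Finset.univ) fun i _ => Complex.hasDerivAt_normSq (hφ i)

theorem AnalyticAt.dotProduct_star {σ : Type*} [Fintype σ] {φ ψ : ℝ → σ → ℂ} {s : ℝ}
    (hφ : AnalyticAt ℝ φ s) (hψ : AnalyticAt ℝ ψ s) :
    AnalyticAt ℝ (fun t => φ t ⬝ᵥ star (ψ t)) s := by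
  have hφi : ∀ i, AnalyticAt ℝ (fun t => φ t i) s := fun i =>
    ((ContinuousLinearMap.proj i : (σ → ℂ) →L[ℝ] ℂ).analyticAt _).comp hφ
  have hψi : ∀ i, AnalyticAt ℝ (fun t => star (ψ t i)) s := fun i =>
    (Complex.conjCLE.toContinuousLinearMap.analyticAt _).comp
      (((ContinuousLinearMap.proj i : (σ → ℂ) →L[ℝ] ℂ).analyticAt _).comp hψ)
  simp only [dotProduct, Pi.star_apply]
  fun_prop

/-- Along an analytic curve in `S = {g₁ = ⋯ = g_p = 0}` with
`∇f(φ(s)) + ∑ λⱼ(s) ∇gⱼ(φ(s)) = λ_{p+1}(s) φ(s)`, if `λ_{p+1} ≢ 0` then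
`Re((1/conj λ_{p+1}(s)) · d(f∘φ)/ds) = (1/2) d(‖φ(s)‖²)/ds` wherever
`λ_{p+1}(s) ≠ 0`; in particular, if `‖φ(s)‖` is not eventually constant, then
`f∘φ` is not constant. -/
theorem tangency_curve_re_deriv (n p : ℕ) (ε : ℝ) (hε : 0 < ε)
    (φ : ℝ → Fin n → ℂ) (hφ : ∀ s ∈ Set.Ioo 0 ε, AnalyticAt ℝ φ s)
    (lam : Fin (p + 1) → ℝ → ℂ) (hlam : ∀ j, ∀ s ∈ Set.Ioo 0 ε, AnalyticAt ℝ (lam j) s)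
    (f : MvPolynomial (Fin n) ℂ) (g : Fin p → MvPolynomial (Fin n) ℂ)
    (hg : ∀ j, ∀ s ∈ Set.Ioo 0 ε, eval (φ s) (g j) = 0)
    (heq : ∀ s ∈ Set.Ioo 0 ε,
      cgrad f (φ s) + (∑ j : Fin p, lam j.castSucc s • cgrad (g j) (φ s))
        = lam (Fin.last p) s • φ s)
    (hne : ¬ ∀ s ∈ Set.Ioo 0 ε, lam (Fin.last p) s = 0) :
    (∀ s ∈ Set.Ioo 0 ε, lam (Fin.last p) s ≠ 0 →
      ((1 / starRingEnd ℂ (lam (Fin.last p) s)) *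
          deriv (fun t => eval (φ t) f) s).re
        = (1 / 2) * deriv (fun t => ∑ i, Complex.normSq (φ t i)) s) ∧
    ((¬ ∃ a : ℝ, 0 < a ∧ a ≤ ε ∧
        ∀ s ∈ Set.Ioo 0 a, ∀ t ∈ Set.Ioo 0 a, hnorm (φ s) = hnorm (φ t)) →
      ¬ ∃ c : ℂ, ∀ s ∈ Set.Ioo 0 ε, eval (φ s) f = c) := by
  set I := Set.Ioo 0 ε
  set L := lam (Fin.last p)
  set A := fun s => deriv φ s ⬝ᵥ star (φ s)
  have hφ' : ∀ s ∈ I, HasDerivAt φ (deriv φ s) s := fun s hs =>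
    (hφ s hs).differentiableAt.hasDerivAt
  have hf : ∀ s ∈ I, HasDerivAt (fun t => eval (φ t) f) (star (L s) * A s) s := fun s hs =>
    hasDerivAt_eval_of_cgrad_add_sum_smul_eq_smul (hφ' s hs)
      (fun j => eventually_of_mem (isOpen_Ioo.mem_nhds hs) (hg j)) (heq s hs)
  have hN : ∀ s ∈ I, HasDerivAt (fun t => ∑ i, Complex.normSq (φ t i)) (2 * (A s).re) s :=
    fun s hs => hasDerivAt_sum_normSq (hφ' s hs)
  refine ⟨fun s hs hL => ?_, ?_⟩
  · rw [(hf s hs).deriv, (hN s hs).deriv, one_div, ← Complex.star_def,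
      inv_mul_cancel_left₀ (star_ne_zero.2 hL)]
    ring
  rintro hnorm_nonconst ⟨c, hc⟩
  obtain ⟨s₀, hs₀, hL₀⟩ : ∃ s ∈ I, L s ≠ 0 := by simpa using hne
  have hA₀ : A =ᶠ[𝓝 s₀] 0 := by
    filter_upwards [(hlam _ s₀ hs₀).continuousAt.eventually_ne hL₀, isOpen_Ioo.mem_nhds hs₀]
      with t hLt ht
    have hderiv := (hf t ht).eq_zero_of_eventuallyEq_const
      (eventually_of_mem (isOpen_Ioo.mem_nhds ht) hc)
    exact (mul_eq_zero.mp hderiv).resolve_left (star_ne_zero.2 hLt)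
  have hA : Set.EqOn A 0 I :=
    AnalyticOnNhd.eqOn_zero_of_preconnected_of_eventuallyEq_zero
      (fun s hs => ((hφ s hs).deriv).dotProduct_star (hφ s hs)) isPreconnected_Ioo hs₀ hA₀
  refine hnorm_nonconst ⟨ε, hε, le_rfl, fun s hs t ht => congrArg Real.sqrt ?_⟩
  refine isOpen_Ioo.is_const_of_deriv_eq_zero isPreconnected_Ioo
    (fun u hu => (hN u hu).differentiableAt.differentiableWithinAt) (fun u hu => ?_) hs ht
  simp [(hN u hu).deriv, hA hu]
end
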